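/- Let A ∈ ℝ^{n×n} be invertible, let B ∈ ℝ^{n×n}, b ∈ ℝⁿ, θ ∈ [0,1), and let Ω ∈ ℝ^{n×n} be such that A + Ω is invertible. Suppose F(x*) = 0 and ‖A^{-1}‖ < 1/[‖B‖ + 2‖Ω‖ + θ(‖Ω+A‖ + ‖B‖ + ‖Ω‖)]. Then any sequence {x^k} in ℝⁿ satisfying ‖(Ω+A)x^{k+1} − [Ω x^k + B|x^k| + b]‖ ≤ θ‖F(x^k)‖ for all k ≥ 0 converges linearly to x* from any starting point x^0. -/

import Mathlib

open Matrix Filter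

/-- Componentwise absolute value of a vector in Euclidean space. -/
noncomputable def vabs {n : ℕ} (x : EuclideanSpace ℝ (Fin n)) : EuclideanSpace ℝ (Fin n) :=
  WithLp.toLp 2 (fun i => |x i|)

/-- A matrix acting on Euclidean space (so that vector norms are the Euclidean 2-norm). -/
noncomputable def mulV {n : ℕ} (M : Matrix (Fin n) (Fin n) ℝ) (x : EuclideanSpace ℝ (Fin n)) :
    EuclideanSpace ℝ (Fin n) :=
  Matrix.toEuclideanCLM (𝕜 := ℝ) M x

/-- Spectral norm of a real matrix: the operator norm induced by the Euclidean vector norm. -/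
noncomputable def spec {n : ℕ} (M : Matrix (Fin n) (Fin n) ℝ) : ℝ :=
  ‖Matrix.toEuclideanCLM (𝕜 := ℝ) M‖

/-- The GAVE residual function `F(x) = A x − B |x| − b`. -/
noncomputable def gaveF {n : ℕ} (A B : Matrix (Fin n) (Fin n) ℝ)
    (b : EuclideanSpace ℝ (Fin n)) (x : EuclideanSpace ℝ (Fin n)) : EuclideanSpace ℝ (Fin n) :=
  mulV A x - mulV B (vabs x) - b

/-- The AVE residual function `A x − |x| − b` (the GAVE with `B = I`). -/
noncomputable def aveF {n : ℕ} (A : Matrix (Fin n) (Fin n) ℝ)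
    (b : EuclideanSpace ℝ (Fin n)) (x : EuclideanSpace ℝ (Fin n)) : EuclideanSpace ℝ (Fin n) :=
  mulV A x - vabs x - b

/-- A sequence converges linearly to `xs`: the distances to `xs` contract by a fixed
factor `c < 1` at every step, and the sequence tends to `xs`. -/
def ConvergesLinearlyTo {n : ℕ} (x : ℕ → EuclideanSpace ℝ (Fin n))
    (xs : EuclideanSpace ℝ (Fin n)) : Prop :=
  (∃ c : ℝ, 0 ≤ c ∧ c < 1 ∧ ∀ k : ℕ, ‖x (k + 1) - xs‖ ≤ c * ‖x k - xs‖) ∧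
    Tendsto x atTop (nhds xs)

/-
With `e_k = x^k − x*` and `A x* = B|x*| + b`, the inexactness residual
`r_k = (Ω+A)x^{k+1} − (Ω x^k + B|x^k| + b)` satisfies
`A e_{k+1} = r_k − Ω e_{k+1} + Ω e_k + B(|x^k| − |x*|)`.
Since `|·|` is 1-Lipschitz and `‖F(x^k)‖ ≤ (‖Ω+A‖ + ‖Ω‖ + ‖B‖)‖e_k‖`, applying `A⁻¹` gives
`‖e_{k+1}‖ ≤ p ‖e_k‖ + q ‖e_{k+1}‖` with `p = ‖A⁻¹‖(‖B‖ + ‖Ω‖ + θ(‖Ω+A‖ + ‖B‖ + ‖Ω‖))` and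
`q = ‖A⁻¹‖‖Ω‖`; the hypothesis on `‖A⁻¹‖` says
exactly `p + q < 1`, so the errors contract by the factor `p / (1 − q) < 1`.
-/

section Scalar

lemma mul_lt_one_of_lt_one_div {a s : ℝ} (ha : 0 ≤ a) (h : a < 1 / s) : a * s < 1 := by
  rcases le_or_gt s 0 with hs | hs
  · exact absurd (ha.trans_lt h) (not_lt.2 (one_div_nonpos.2 hs))
  · rwa [lt_div_iff₀ hs] at h

lemma le_div_one_sub_mul_of_le_add_mul {u v p q : ℝ} (hq : q < 1) (h : u ≤ p * v + q * u) :
    u ≤ p / (1 - q) * v := by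
  rw [div_mul_eq_mul_div, le_div_iff₀ (sub_pos.2 hq)]
  linarith

end Scalar

section Euclidean

variable {n : ℕ}

lemma norm_vabs_sub_vabs_le (x y : EuclideanSpace ℝ (Fin n)) : ‖vabs x - vabs y‖ ≤ ‖x - y‖ := by
  rw [EuclideanSpace.norm_eq, EuclideanSpace.norm_eq]
  refine Real.sqrt_le_sqrt (Finset.sum_le_sum fun i _ => ?_)
  have hi : ‖|x i| - |y i|‖ ≤ ‖x i - y i‖ := by
    simpa only [Real.norm_eq_abs] using abs_abs_sub_abs_le_abs_sub (x i) (y i)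
  simpa [vabs] using pow_le_pow_left₀ (norm_nonneg _) hi 2

lemma mulV_add (M N : Matrix (Fin n) (Fin n) ℝ) (x : EuclideanSpace ℝ (Fin n)) :
    mulV (M + N) x = mulV M x + mulV N x := by
  simp [mulV]

lemma mulV_sub (M : Matrix (Fin n) (Fin n) ℝ) (u v : EuclideanSpace ℝ (Fin n)) :
    mulV M (u - v) = mulV M u - mulV M v :=
  map_sub _ u v

lemma norm_mulV_le (M : Matrix (Fin n) (Fin n) ℝ) (x : EuclideanSpace ℝ (Fin n)) :
    ‖mulV M x‖ ≤ spec M * ‖x‖ :=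
  (Matrix.toEuclideanCLM (𝕜 := ℝ) M).le_opNorm x

lemma spec_nonneg (M : Matrix (Fin n) (Fin n) ℝ) : 0 ≤ spec M :=
  norm_nonneg _

lemma spec_le_spec_add_add_spec (A Ω : Matrix (Fin n) (Fin n) ℝ) :
    spec A ≤ spec (Ω + A) + spec Ω := by
  unfold spec
  simpa using
    norm_sub_le (Matrix.toEuclideanCLM (𝕜 := ℝ) (Ω + A)) (Matrix.toEuclideanCLM (𝕜 := ℝ) Ω)

lemma mulV_inv_mulV {A : Matrix (Fin n) (Fin n) ℝ} (hA : IsUnit A) (v : EuclideanSpace ℝ (Fin n)) :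
    mulV A⁻¹ (mulV A v) = v := by
  have h : A⁻¹ * A = 1 := nonsing_inv_mul A ((Matrix.isUnit_iff_isUnit_det A).mp hA)
  have hcomp : mulV A⁻¹ (mulV A v) = mulV (A⁻¹ * A) v := by
    simp [mulV, _root_.map_mul]
  rw [hcomp, h]
  simp [mulV]

lemma norm_le_spec_inv_mul {A : Matrix (Fin n) (Fin n) ℝ} (hA : IsUnit A)
    (v : EuclideanSpace ℝ (Fin n)) : ‖v‖ ≤ spec A⁻¹ * ‖mulV A v‖ := by
  simpa only [mulV_inv_mulV hA] using norm_mulV_le A⁻¹ (mulV A v)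

end Euclidean

section GAVE

variable {n : ℕ} (A B Ω : Matrix (Fin n) (Fin n) ℝ) (b : EuclideanSpace ℝ (Fin n))
  {xs : EuclideanSpace ℝ (Fin n)}

lemma gaveF_eq_of_root (hxs : gaveF A B b xs = 0) (y : EuclideanSpace ℝ (Fin n)) :
    gaveF A B b y = mulV A (y - xs) - mulV B (vabs y - vabs xs) := by
  rw [← sub_zero (gaveF A B b y), ← hxs]
  simp only [gaveF, mulV_sub]
  abel

lemma norm_gaveF_le (hxs : gaveF A B b xs = 0) (y : EuclideanSpace ℝ (Fin n)) :
    ‖gaveF A B b y‖ ≤ (spec (Ω + A) + spec B + spec Ω) * ‖y - xs‖ := by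
  rw [gaveF_eq_of_root A B b hxs]
  have hA := norm_mulV_le A (y - xs)
  have hB := (norm_mulV_le B _).trans
    (mul_le_mul_of_nonneg_left (norm_vabs_sub_vabs_le y xs) (spec_nonneg B))
  have hspec := mul_le_mul_of_nonneg_right (spec_le_spec_add_add_spec A Ω) (norm_nonneg (y - xs))
  linarith [norm_sub_le (mulV A (y - xs)) (mulV B (vabs y - vabs xs))]

lemma mulV_sub_eq_residual_add (hxs : gaveF A B b xs = 0) (y y' : EuclideanSpace ℝ (Fin n)) :
    mulV A (y' - xs) = (mulV (Ω + A) y' - (mulV Ω y + mulV B (vabs y) + b))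
      - mulV Ω (y' - xs) + mulV Ω (y - xs) + mulV B (vabs y - vabs xs) := by
  have hAxs : mulV A xs = mulV B (vabs xs) + b := by
    rw [gaveF, sub_sub, sub_eq_zero] at hxs
    exact hxs
  simp only [mulV_sub, mulV_add, hAxs]
  abel

lemma norm_sub_root_le_of_inexact_step (hA : IsUnit A) (hxs : gaveF A B b xs = 0) {θ : ℝ}
    (hθ : 0 ≤ θ) {y y' : EuclideanSpace ℝ (Fin n)}
    (hstep : ‖mulV (Ω + A) y' - (mulV Ω y + mulV B (vabs y) + b)‖ ≤ θ * ‖gaveF A B b y‖) :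
    ‖y' - xs‖ ≤ spec A⁻¹ * (spec B + spec Ω + θ * (spec (Ω + A) + spec B + spec Ω)) * ‖y - xs‖
      + spec A⁻¹ * spec Ω * ‖y' - xs‖ := by
  set r := mulV (Ω + A) y' - (mulV Ω y + mulV B (vabs y) + b)
  have hr : ‖r‖ ≤ θ * ((spec (Ω + A) + spec B + spec Ω) * ‖y - xs‖) :=
    hstep.trans (mul_le_mul_of_nonneg_left (norm_gaveF_le A B Ω b hxs y) hθ)
  have hΩ' := norm_mulV_le Ω (y' - xs)
  have hΩ := norm_mulV_le Ω (y - xs)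
  have hB := (norm_mulV_le B _).trans
    (mul_le_mul_of_nonneg_left (norm_vabs_sub_vabs_le y xs) (spec_nonneg B))
  have hAe : ‖mulV A (y' - xs)‖ ≤ ‖r‖ + ‖mulV Ω (y' - xs)‖ + ‖mulV Ω (y - xs)‖
      + ‖mulV B (vabs y - vabs xs)‖ := by
    rw [mulV_sub_eq_residual_add A B Ω b hxs y y']
    linarith [norm_add_le (r - mulV Ω (y' - xs) + mulV Ω (y - xs)) (mulV B (vabs y - vabs xs)),
      norm_add_le (r - mulV Ω (y' - xs)) (mulV Ω (y - xs)), norm_sub_le r (mulV Ω (y' - xs))]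
  calc ‖y' - xs‖ ≤ spec A⁻¹ * ‖mulV A (y' - xs)‖ := norm_le_spec_inv_mul hA _
    _ ≤ spec A⁻¹ * ((spec B + spec Ω + θ * (spec (Ω + A) + spec B + spec Ω)) * ‖y - xs‖
          + spec Ω * ‖y' - xs‖) :=
        mul_le_mul_of_nonneg_left (by linarith) (spec_nonneg _)
    _ = _ := by ring

end GAVE

lemma convergesLinearlyTo_of_contraction {n : ℕ} {x : ℕ → EuclideanSpace ℝ (Fin n)}
    {xs : EuclideanSpace ℝ (Fin n)} {c : ℝ} (hc0 : 0 ≤ c) (hc1 : c < 1)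
    (h : ∀ k, ‖x (k + 1) - xs‖ ≤ c * ‖x k - xs‖) : ConvergesLinearlyTo x xs := by
  have geom : ∀ k, ‖x k - xs‖ ≤ c ^ k * ‖x 0 - xs‖ := by
    intro k
    induction k with
    | zero => simp
    | succ k ih =>
      calc ‖x (k + 1) - xs‖ ≤ c * (c ^ k * ‖x 0 - xs‖) :=
            (h k).trans (mul_le_mul_of_nonneg_left ih hc0)
        _ = c ^ (k + 1) * ‖x 0 - xs‖ := by ring
  refine ⟨⟨c, hc0, hc1, h⟩, tendsto_iff_norm_sub_tendsto_zero.2 ?_⟩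
  have hpow := (tendsto_pow_atTop_nhds_zero_of_lt_one hc0 hc1).mul_const ‖x 0 - xs‖
  rw [zero_mul] at hpow
  exact squeeze_zero (fun k => norm_nonneg _) geom hpow

theorem stmt5_general {n : ℕ} (A B Ω : Matrix (Fin n) (Fin n) ℝ)
    (b : EuclideanSpace ℝ (Fin n)) (hA : IsUnit A) (θ : ℝ) (hθ0 : 0 ≤ θ)
    (xs : EuclideanSpace ℝ (Fin n)) (hxs : gaveF A B b xs = 0)
    (hcond : spec A⁻¹ <
      1 / (spec B + 2 * spec Ω + θ * (spec (Ω + A) + spec B + spec Ω)))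
    (x : ℕ → EuclideanSpace ℝ (Fin n))
    (hx : ∀ k : ℕ, ‖mulV (Ω + A) (x (k + 1)) - (mulV Ω (x k) + mulV B (vabs (x k)) + b)‖ ≤
      θ * ‖gaveF A B b (x k)‖) :
    ConvergesLinearlyTo x xs := by
  set p := spec A⁻¹ * (spec B + spec Ω + θ * (spec (Ω + A) + spec B + spec Ω))
  set q := spec A⁻¹ * spec Ω
  have hp : 0 ≤ p := mul_nonneg (spec_nonneg _)
    (by have := spec_nonneg B; have := spec_nonneg Ω; have := spec_nonneg (Ω + A); positivity)
  have hpq : p + q < 1 := by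
    have := mul_lt_one_of_lt_one_div (spec_nonneg _) hcond
    linarith
  have hq : q < 1 := by linarith
  refine convergesLinearlyTo_of_contraction (div_nonneg hp (sub_pos.2 hq).le)
    ((div_lt_one (sub_pos.2 hq)).2 (by linarith)) fun k => ?_
  exact le_div_one_sub_mul_of_le_add_mul hq
    (norm_sub_root_le_of_inexact_step A B Ω b hA hxs hθ0 (hx k))

theorem stmt5 {n : ℕ} (A B Ω : Matrix (Fin n) (Fin n) ℝ)
    (b : EuclideanSpace ℝ (Fin n)) (hA : IsUnit A) (θ : ℝ) (hθ0 : 0 ≤ θ) (hθ1 : θ < 1)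
    (hinv : IsUnit (A + Ω))
    (xs : EuclideanSpace ℝ (Fin n)) (hxs : gaveF A B b xs = 0)
    (hcond : spec A⁻¹ <
      1 / (spec B + 2 * spec Ω + θ * (spec (Ω + A) + spec B + spec Ω)))
    (x : ℕ → EuclideanSpace ℝ (Fin n))
    (hx : ∀ k : ℕ, ‖mulV (Ω + A) (x (k + 1)) - (mulV Ω (x k) + mulV B (vabs (x k)) + b)‖ ≤
      θ * ‖gaveF A B b (x k)‖) :
    ConvergesLinearlyTo x xs :=
  stmt5_general A B Ω b hA θ hθ0 xs hxs hcond x hx
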